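/- arXiv:2508.05565 — 7 statements merged into one kernel-verified Lean document; each statement's English description precedes it below -/
import Mathlib

section
/- An increasing continuous function ω : [0,∞) → [0,∞) satisfies ω(2t) = O(ω(t)) if and only if there exist constants K, C ≥ 1 such that ω(t₁ + t₂) ≤ K[ω(t₁) + ω(t₂)] + log C for all t₁, t₂ ≥ 0. -/
/-- An increasing continuous function ω : [0,∞) → [0,∞) satisfies
ω(2t) = O(ω(t)) iff there exist K, C ≥ 1 with
ω(t₁+t₂) ≤ K[ω(t₁)+ω(t₂)] + log C for all t₁, t₂ ≥ 0. -/
theorem stmt0 (ω : ℝ → ℝ) (hcont : ContinuousOn ω (Set.Ici 0))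
    (hmono : MonotoneOn ω (Set.Ici 0)) (hpos : ∀ t ≥ (0:ℝ), 0 ≤ ω t) :
    (∃ A > (0:ℝ), ∃ T > (0:ℝ), ∀ t ≥ T, ω (2 * t) ≤ A * ω t) ↔
    (∃ K ≥ (1:ℝ), ∃ C ≥ (1:ℝ), ∀ t₁ ≥ (0:ℝ), ∀ t₂ ≥ (0:ℝ),
      ω (t₁ + t₂) ≤ K * (ω t₁ + ω t₂) + Real.log C) := by
  constructor
  · rintro ⟨A, hA, T, hT, h⟩
    refine ⟨max A 1, le_max_right _ _, Real.exp (ω (2 * T)),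
      Real.one_le_exp (hpos _ (by linarith)), ?_⟩
    intro t₁ ht₁ t₂ ht₂
    rw [Real.log_exp]
    have hw1 := hpos t₁ ht₁
    have hw2 := hpos t₂ ht₂
    have hw2T := hpos (2 * T) (by linarith)
    wlog hle : t₁ ≤ t₂ generalizing t₁ t₂
    · have h' := this t₂ ht₂ t₁ ht₁ hw2 hw1 (by linarith)
      rw [add_comm] at h'
      linarith
    rcases le_or_gt T t₂ with hT2 | hT2
    · have h1 : ω (t₁ + t₂) ≤ ω (2 * t₂) :=
        hmono (Set.mem_Ici.mpr (by linarith)) (Set.mem_Ici.mpr (by linarith)) (by linarith)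
      have h2 := h t₂ hT2
      have h3 : A * ω t₂ ≤ max A 1 * ω t₂ :=
        mul_le_mul_of_nonneg_right (le_max_left A 1) hw2
      nlinarith [le_max_right A 1]
    · have h1 : ω (t₁ + t₂) ≤ ω (2 * T) :=
        hmono (Set.mem_Ici.mpr (by linarith)) (Set.mem_Ici.mpr (by linarith)) (by linarith)
      nlinarith [le_max_right A 1]
  · rintro ⟨K, hK, C, hC, h⟩
    by_cases hex : ∃ t₀ > (0:ℝ), 0 < ω t₀
    · obtain ⟨t₀, ht₀, hω⟩ := hex
      have hlog : 0 ≤ Real.log C := Real.log_nonneg hC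
      have hdiv : 0 ≤ Real.log C / ω t₀ := div_nonneg hlog hω.le
      refine ⟨2 * K + Real.log C / ω t₀, by linarith, t₀, ht₀, ?_⟩
      intro t ht
      have h1 := h t (by linarith) t (by linarith)
      have h2 : ω t₀ ≤ ω t :=
        hmono (Set.mem_Ici.mpr ht₀.le) (Set.mem_Ici.mpr (by linarith)) ht
      have h3 : Real.log C ≤ Real.log C / ω t₀ * ω t := by
        rw [div_mul_eq_mul_div, le_div_iff₀ hω]
        nlinarith
      have h2t : 2 * t = t + t := by ring
      rw [h2t]
      nlinarith [hpos t (by linarith : t ≥ (0:ℝ))]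
    · push_neg at hex
      refine ⟨1, one_pos, 1, one_pos, ?_⟩
      intro t ht
      have h1 : ω (2 * t) ≤ 0 := hex (2 * t) (by linarith)
      have h2 : 0 ≤ ω t := hpos t (by linarith)
      linarith
end

section
/- Let α and β be exponent sequences with counting functions ν_α, ν_β. Then α_n = o(β_n) if and only if for every L > 0 there exists s₀ ≥ 0 such that ν_β(s) ≤ ν_α(Ls) for all s ≥ s₀. -/
open Filter Asymptotics

/-- An exponent sequence: non-decreasing, non-negative, tending to infinity. -/
def ExpSeq (α : ℕ → ℝ) : Prop :=
  Monotone α ∧ (∀ n, 0 ≤ α n) ∧ Tendsto α atTop atTop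

/-- Counting function ν_α(s) = #{n : α_n ≤ s}. -/
noncomputable def nu (α : ℕ → ℝ) (s : ℝ) : ℕ := Nat.card {n : ℕ | α n ≤ s}

lemma nu_set_finite {α : ℕ → ℝ} (hα : ExpSeq α) (s : ℝ) :
    {n : ℕ | α n ≤ s}.Finite := by
  obtain ⟨N, hN⟩ := (hα.2.2.eventually_gt_atTop s).exists_forall_of_atTop
  refine (Set.finite_Iio N).subset fun n hn => ?_
  by_contra h
  exact (hN n (le_of_not_gt h)).not_ge hn

lemma lt_nu_iff {α : ℕ → ℝ} (hα : ExpSeq α) (s : ℝ) (n : ℕ) :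
    n < nu α s ↔ α n ≤ s := by
  have hfin := nu_set_finite hα s
  constructor
  · intro h
    by_contra hns
    have hsub : {m : ℕ | α m ≤ s} ⊆ Set.Iio n := by
      intro m hm
      by_contra hmn
      exact hns (le_trans (hα.1 (le_of_not_gt hmn)) hm)
    have h2 := Set.ncard_le_ncard hsub (Set.finite_Iio n)
    rw [← Finset.coe_Iio, Set.ncard_coe_finset, Nat.card_Iio] at h2
    simp only [nu, Nat.card_coe_set_eq] at h
    omega
  · intro h
    have hsub : Set.Iic n ⊆ {m : ℕ | α m ≤ s} := fun m hm =>
      le_trans (hα.1 hm) h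
    have h2 := Set.ncard_le_ncard hsub hfin
    rw [← Finset.coe_Iic, Set.ncard_coe_finset, Nat.card_Iic] at h2
    simp only [nu, Nat.card_coe_set_eq]
    omega

/-- α = o(β) iff for every L > 0 there is s₀ ≥ 0 with
ν_β(s) ≤ ν_α(Ls) for all s ≥ s₀. -/
theorem stmt2 (α β : ℕ → ℝ) (hα : ExpSeq α) (hβ : ExpSeq β) :
    (fun n => α n) =o[atTop] (fun n => β n) ↔
    ∀ L > (0:ℝ), ∃ s₀ ≥ (0:ℝ), ∀ s ≥ s₀, nu β s ≤ nu α (L * s) := by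
  constructor
  · intro h L hL
    obtain ⟨N, hN⟩ := (h.def hL).exists_forall_of_atTop
    refine ⟨max 0 (α N / L), le_max_left _ _, fun s hs => ?_⟩
    have hs0 : (0:ℝ) ≤ s := le_trans (le_max_left _ _) hs
    have hsub : {n : ℕ | β n ≤ s} ⊆ {n : ℕ | α n ≤ L * s} := by
      intro n hn
      rcases le_or_gt N n with hn' | hn'
      · have := hN n hn'
        rw [Real.norm_eq_abs, Real.norm_eq_abs, abs_of_nonneg (hα.2.1 n),
          abs_of_nonneg (hβ.2.1 n)] at this
        exact this.trans (by nlinarith [hn.out])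
      · have h1 : α n ≤ α N := hα.1 hn'.le
        have h2 : α N / L ≤ s := le_trans (le_max_right _ _) hs
        have : α N ≤ L * s := by
          rw [div_le_iff₀ hL] at h2; linarith [mul_comm s L]
        exact le_trans h1 this
    simp only [nu, Nat.card_coe_set_eq]
    exact Set.ncard_le_ncard hsub (nu_set_finite hα (L * s))
  · intro h
    rw [isLittleO_iff]
    intro ε hε
    obtain ⟨s₀, hs₀, H⟩ := h ε hε
    filter_upwards [hβ.2.2.eventually_ge_atTop s₀] with n hn
    have h1 : n < nu β (β n) := (lt_nu_iff hβ (β n) n).2 le_rfl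
    have h2 : n < nu α (ε * β n) := lt_of_lt_of_le h1 (H (β n) hn)
    have h3 : α n ≤ ε * β n := (lt_nu_iff hα (ε * β n) n).1 h2
    rw [Real.norm_eq_abs, Real.norm_eq_abs, abs_of_nonneg (hα.2.1 n),
      abs_of_nonneg (hβ.2.1 n)]
    exact h3
end

section
/- Let α and β be exponent sequences, and let α♯β denote the non-decreasing rearrangement of the multiset {α_k + β_n : (k,n) ∈ ℕ²}. Then for all s ≥ 0, ν_α(s/2)·ν_β(s/2) ≤ ν_{α♯β}(s) ≤ ν_α(s)·ν_β(s). -/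
open Filter Asymptotics

/-- Counting function of the ♯-product: ν_{α♯β}(s) = #{(k,n) : α_k + β_n ≤ s}. -/
noncomputable def nu2 (α β : ℕ → ℝ) (s : ℝ) : ℕ :=
  Nat.card {p : ℕ × ℕ | α p.1 + β p.2 ≤ s}

lemma finite_le (α : ℕ → ℝ) (hα : ExpSeq α) (s : ℝ) : {n : ℕ | α n ≤ s}.Finite := by
  obtain ⟨N, hN⟩ := (hα.2.2.eventually_gt_atTop s).exists_forall_of_atTop
  apply Set.Finite.subset (Set.finite_Iio N)
  intro n hn
  by_contra h
  exact absurd hn (not_le.2 (hN n (not_lt.1 h)))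

lemma card_prod (s t : Set ℕ) : Nat.card ↥(s ×ˢ t) = Nat.card s * Nat.card t := by
  rw [Nat.card_congr (Equiv.Set.prod s t), Nat.card_prod]

/-- ν_α(s/2)·ν_β(s/2) ≤ ν_{α♯β}(s) ≤ ν_α(s)·ν_β(s) for all s ≥ 0. -/
theorem stmt4 (α β : ℕ → ℝ) (hα : ExpSeq α) (hβ : ExpSeq β) :
    ∀ s ≥ (0:ℝ), nu α (s/2) * nu β (s/2) ≤ nu2 α β s ∧ nu2 α β s ≤ nu α s * nu β s := by
  intro s hs
  have hsub : {p : ℕ × ℕ | α p.1 + β p.2 ≤ s} ⊆ {k : ℕ | α k ≤ s} ×ˢ {n : ℕ | β n ≤ s} := by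
    rintro ⟨k, n⟩ hp
    simp only [Set.mem_setOf_eq] at hp
    exact ⟨show α k ≤ s by linarith [hβ.2.1 n], show β n ≤ s by linarith [hα.2.1 k]⟩
  have hfin : ({k : ℕ | α k ≤ s} ×ˢ {n : ℕ | β n ≤ s}).Finite :=
    (finite_le α hα s).prod (finite_le β hβ s)
  have hfin2 : {p : ℕ × ℕ | α p.1 + β p.2 ≤ s}.Finite := hfin.subset hsub
  have hsub2 : {k : ℕ | α k ≤ s/2} ×ˢ {n : ℕ | β n ≤ s/2} ⊆
      {p : ℕ × ℕ | α p.1 + β p.2 ≤ s} := by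
    rintro ⟨k, n⟩ ⟨h1, h2⟩
    simp only [Set.mem_setOf_eq] at *
    linarith
  constructor
  · rw [nu, nu, nu2, ← card_prod, Nat.card_coe_set_eq, Nat.card_coe_set_eq]
    exact Set.ncard_le_ncard hsub2 hfin2
  · rw [nu, nu, nu2, ← card_prod, Nat.card_coe_set_eq, Nat.card_coe_set_eq]
    exact Set.ncard_le_ncard hsub hfin
end

section
/- Let α and β be exponent sequences. If log n = O(α_n) and log n = O(β_n), then log n = O((α♯β)_n), where α♯β is the non-decreasing rearrangement of {α_k + β_n : (k,n) ∈ ℕ²}. -/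
open Filter Asymptotics

/-- `γ` is the non-decreasing rearrangement α♯β of the family (α_k + β_n):
it is non-decreasing and has the same counting function as the double family. -/
def IsSharp (α β γ : ℕ → ℝ) : Prop :=
  Monotone γ ∧ ∀ s : ℝ, nu γ s = nu2 α β s

/-! Write `ν` for counting functions and `γ = α♯β`. For `α ≥ 0`, `log n = O(α_n)` yields
`ν_α(s) ≤ K e^{Cs}`. As `γ` is non-decreasing, `γ_0, …, γ_n ≤ γ_n`, so
`n + 1 ≤ ν_γ(γ_n) = ν_{α♯β}(γ_n) ≤ ν_α(γ_n) ν_β(γ_n) ≤ K e^{C γ_n}`;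
taking logarithms and using `γ → ∞` gives `log n = O(γ_n)`. -/

open Real

theorem tendsto_atTop_iff_finite_setOf_le {f : ℕ → ℝ} :
    Tendsto f atTop atTop ↔ ∀ s, {n | f n ≤ s}.Finite := by
  simp only [← Nat.cofinite_eq_atTop, tendsto_atTop, eventually_cofinite, not_le]
  exact ⟨fun h s => (h (s + 1)).subset fun n (hn : f n ≤ s) => hn.trans_lt (lt_add_one s),
    fun h s => (h s).subset fun n (hn : f n < s) => hn.le⟩

theorem Asymptotics.isBigO_of_norm_le_add_mul {ι : Type*} {l : Filter ι} {f γ : ι → ℝ}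
    {a b : ℝ} (hγ : Tendsto γ l atTop) (h : ∀ᶠ x in l, ‖f x‖ ≤ a + b * γ x) : f =O[l] γ := by
  refine IsBigO.of_bound (|a| + |b|) ?_
  filter_upwards [h, hγ.eventually_ge_atTop 1] with x hx hγx
  rw [norm_of_nonneg (zero_le_one.trans hγx)]
  nlinarith [le_abs_self a, le_abs_self b, abs_nonneg a]

theorem Monotone.le_of_infinite_setOf_le {γ : ℕ → ℝ} (hγ : Monotone γ) {s : ℝ}
    (hs : {n | γ n ≤ s}.Infinite) (n : ℕ) : γ n ≤ s := by
  obtain ⟨m, hm, hnm⟩ := hs.exists_gt n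
  exact (hγ hnm.le).trans hm

theorem succ_le_nu_apply {γ : ℕ → ℝ} (hγ : Monotone γ) (m : ℕ)
    (hfin : {n | γ n ≤ γ m}.Finite) : m + 1 ≤ nu γ (γ m) := by
  calc m + 1 = Nat.card (Set.Iic m) := by simp
    _ ≤ nu γ (γ m) := Nat.card_mono hfin fun n hn => hγ hn

theorem nu_le_mul_exp_of_isBigO_log {α : ℕ → ℝ} (hα : ∀ n, 0 ≤ α n)
    (h : (fun n : ℕ => log n) =O[atTop] α) :
    ∃ C K : ℝ, 0 < K ∧ ∀ s, (nu α s : ℝ) ≤ K * exp (C * s) := by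
  obtain ⟨C, hC0, hC⟩ := h.exists_pos
  obtain ⟨N, hN⟩ := eventually_atTop.1 hC.bound
  refine ⟨C, N + 2, by positivity, fun s => ?_⟩
  rcases lt_or_ge s 0 with hs | hs
  · have : {n | α n ≤ s} = ∅ := Set.eq_empty_of_forall_notMem fun n hn =>
      (hα n).not_gt (hn.trans_lt hs)
    rw [nu, this, Nat.card_of_isEmpty]
    push_cast; positivity
  have hsub : {n | α n ≤ s} ⊆ Set.Iio (N + ⌊exp (C * s)⌋₊ + 1) := by
    intro n hn
    rcases lt_or_ge n N with hnN | hnN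
    · simp only [Set.mem_Iio]; omega
    rcases Nat.eq_zero_or_pos n with rfl | hn0
    · simp
    have hlog : log n ≤ C * s := by
      have := hN n hnN
      rw [norm_of_nonneg (log_natCast_nonneg n), norm_of_nonneg (hα n)] at this
      exact this.trans (mul_le_mul_of_nonneg_left hn hC0.le)
    have := Nat.le_floor ((log_le_iff_le_exp (by positivity)).1 hlog)
    simp only [Set.mem_Iio]; omega
  have hexp : 1 ≤ exp (C * s) := one_le_exp (by positivity)
  calc (nu α s : ℝ) ≤ (N + ⌊exp (C * s)⌋₊ + 1 : ℕ) := by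
        exact_mod_cast (Nat.card_mono (Set.finite_Iio _) hsub).trans (by simp)
    _ ≤ N + exp (C * s) + 1 := by push_cast; linarith [Nat.floor_le (one_pos.le.trans hexp)]
    _ ≤ (N + 2) * exp (C * s) := by nlinarith

theorem setOf_add_le_subset_prod {α β : ℕ → ℝ} (hα : ∀ n, 0 ≤ α n) (hβ : ∀ n, 0 ≤ β n)
    (s : ℝ) : {p : ℕ × ℕ | α p.1 + β p.2 ≤ s} ⊆ {n | α n ≤ s} ×ˢ {n | β n ≤ s} :=
  fun p (hp : α p.1 + β p.2 ≤ s) =>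
    ⟨show α p.1 ≤ s by linarith [hβ p.2], show β p.2 ≤ s by linarith [hα p.1]⟩

theorem nu2_le_nu_mul_nu {α β : ℕ → ℝ} (hα : ∀ n, 0 ≤ α n) (hβ : ∀ n, 0 ≤ β n) {s : ℝ}
    (hαs : {n | α n ≤ s}.Finite) (hβs : {n | β n ≤ s}.Finite) :
    nu2 α β s ≤ nu α s * nu β s := by
  calc nu2 α β s ≤ Nat.card ({n | α n ≤ s} ×ˢ {n | β n ≤ s} : Set (ℕ × ℕ)) :=
        Nat.card_mono (hαs.prod hβs) (setOf_add_le_subset_prod hα hβ s)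
    _ = nu α s * nu β s := by
        rw [Nat.card_congr (Equiv.Set.prod _ _), Nat.card_prod, nu, nu]

theorem IsSharp.finite_setOf_le {α β γ : ℕ → ℝ} (hα : ExpSeq α) (hβ : ExpSeq β)
    (hγ : IsSharp α β γ) (s : ℝ) : {n | γ n ≤ s}.Finite := by
  by_contra hinf
  set t := max s (α 0 + β 0)
  have hαfin := tendsto_atTop_iff_finite_setOf_le.1 hα.2.2 t
  have hβfin := tendsto_atTop_iff_finite_setOf_le.1 hβ.2.2 t
  -- `nu γ t` would count all of `ℕ`, i.e. be the junk value `Nat.card ℕ = 0`,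
  -- while `nu2 α β t` counts `(0, 0)`.
  have hγt : {n | γ n ≤ t} = Set.univ :=
    Set.eq_univ_of_forall fun n => (hγ.1.le_of_infinite_setOf_le hinf n).trans (le_max_left _ _)
  have hpos : 0 < nu2 α β t := by
    have : Finite {p : ℕ × ℕ | α p.1 + β p.2 ≤ t} :=
      (hαfin.prod hβfin).subset (setOf_add_le_subset_prod hα.2.1 hβ.2.1 t)
    exact Nat.card_pos_iff.2 ⟨⟨⟨(0, 0), show α 0 + β 0 ≤ t from le_max_right _ _⟩⟩, this⟩
  rw [← hγ.2, nu, hγt, Nat.card_univ, Nat.card_eq_zero_of_infinite] at hpos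
  exact hpos.false

/-- if log n = O(α_n) and log n = O(β_n), then log n = O((α♯β)_n). -/
theorem stmt5 (α β γ : ℕ → ℝ) (hα : ExpSeq α) (hβ : ExpSeq β)
    (hγ : IsSharp α β γ)
    (h1 : (fun n : ℕ => Real.log n) =O[atTop] α)
    (h2 : (fun n : ℕ => Real.log n) =O[atTop] β) :
    (fun n : ℕ => Real.log n) =O[atTop] γ := by
  obtain ⟨Cα, Kα, hKα, hνα⟩ := nu_le_mul_exp_of_isBigO_log hα.2.1 h1
  obtain ⟨Cβ, Kβ, hKβ, hνβ⟩ := nu_le_mul_exp_of_isBigO_log hβ.2.1 h2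
  have hfin := hγ.finite_setOf_le hα hβ
  refine isBigO_of_norm_le_add_mul (a := log (Kα * Kβ)) (b := Cα + Cβ)
    (tendsto_atTop_iff_finite_setOf_le.2 hfin) ?_
  filter_upwards [eventually_gt_atTop 0] with n hn
  have hcount : (n + 1 : ℝ) ≤ Kα * Kβ * exp ((Cα + Cβ) * γ n) := calc
    (n + 1 : ℝ) ≤ nu γ (γ n) := by exact_mod_cast succ_le_nu_apply hγ.1 n (hfin _)
    _ = nu2 α β (γ n) := by rw [hγ.2]
    _ ≤ nu α (γ n) * nu β (γ n) := by
        exact_mod_cast nu2_le_nu_mul_nu hα.2.1 hβ.2.1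
          (tendsto_atTop_iff_finite_setOf_le.1 hα.2.2 _)
          (tendsto_atTop_iff_finite_setOf_le.1 hβ.2.2 _)
    _ ≤ Kα * exp (Cα * γ n) * (Kβ * exp (Cβ * γ n)) :=
        mul_le_mul (hνα _) (hνβ _) (Nat.cast_nonneg _) (by positivity)
    _ = Kα * Kβ * exp ((Cα + Cβ) * γ n) := by rw [add_mul, exp_add]; ring
  calc ‖log n‖ = log n := norm_of_nonneg (log_natCast_nonneg n)
    _ ≤ log (n + 1) := log_le_log (by positivity) (by linarith)
    _ ≤ log (Kα * Kβ) + (Cα + Cβ) * γ n := by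
        rw [log_le_iff_le_exp (by positivity), exp_add, exp_log (by positivity)]
        exact hcount
end

section
/- Let α and β be exponent sequences. If log n = o(α_n) and log n = o(β_n), then log n = o((α♯β)_n). -/
open Filter Asymptotics

lemma fin_count {α : ℕ → ℝ} (hα : Tendsto α atTop atTop) (s : ℝ) :
    {n : ℕ | α n ≤ s}.Finite := by
  obtain ⟨N, hN⟩ := (hα.eventually_gt_atTop s).exists_forall_of_atTop
  refine (Set.finite_Iio N).subset (fun n hn => ?_)
  by_contra h
  exact absurd hn (not_le.2 (hN n (not_lt.1 h)))

lemma fin2_count {α β : ℕ → ℝ} (hα0 : ∀ n, 0 ≤ α n) (hβ0 : ∀ n, 0 ≤ β n)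
    (hαt : Tendsto α atTop atTop) (hβt : Tendsto β atTop atTop) (s : ℝ) :
    {p : ℕ × ℕ | α p.1 + β p.2 ≤ s}.Finite := by
  refine (Set.Finite.prod (fin_count hαt s) (fin_count hβt s)).subset (fun p hp => ?_)
  exact ⟨le_trans (le_add_of_nonneg_right (hβ0 p.2)) hp,
    le_trans (le_add_of_nonneg_left (hα0 p.1)) hp⟩

lemma nu2_le {α β : ℕ → ℝ} (hα0 : ∀ n, 0 ≤ α n) (hβ0 : ∀ n, 0 ≤ β n)
    (hαt : Tendsto α atTop atTop) (hβt : Tendsto β atTop atTop) (s : ℝ) :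
    nu2 α β s ≤ nu α s * nu β s := by
  have hsub : {p : ℕ × ℕ | α p.1 + β p.2 ≤ s} ⊆ {k | α k ≤ s} ×ˢ {n | β n ≤ s} :=
    fun p hp => ⟨le_trans (le_add_of_nonneg_right (hβ0 p.2)) hp,
      le_trans (le_add_of_nonneg_left (hα0 p.1)) hp⟩
  calc nu2 α β s ≤ Nat.card ({k | α k ≤ s} ×ˢ {n | β n ≤ s} : Set (ℕ × ℕ)) := by
        rw [nu2, Nat.card_coe_set_eq, Nat.card_coe_set_eq]
        exact Set.ncard_le_ncard hsub ((fin_count hαt s).prod (fin_count hβt s))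
    _ = nu α s * nu β s := by
        rw [Nat.card_congr (Equiv.Set.prod _ _), Nat.card_prod]; rfl

lemma alpha_at_nu {α : ℕ → ℝ} (hm : Monotone α) (hαt : Tendsto α atTop atTop)
    (s : ℝ) (h : 1 ≤ nu α s) : α (nu α s - 1) ≤ s := by
  have hfin := fin_count hαt s
  have hcard : nu α s = hfin.toFinset.card := by
    rw [nu, Nat.card_coe_set_eq, Set.ncard_eq_toFinset_card _ hfin]
  have hne : hfin.toFinset.Nonempty := Finset.card_pos.1 (by omega)
  set m := hfin.toFinset.max' hne with hmdef
  have hms : α m ≤ s := by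
    have := hfin.toFinset.max'_mem hne
    simpa using this
  have hsub : hfin.toFinset ⊆ Finset.range (m + 1) := by
    intro k hk
    simp only [Finset.mem_range]
    exact Nat.lt_succ_of_le (hfin.toFinset.le_max' k hk)
  have : nu α s ≤ m + 1 := by
    rw [hcard]; simpa using Finset.card_le_card hsub
  exact le_trans (hm (by omega)) hms

lemma nu_upper {α : ℕ → ℝ} (hm : Monotone α) (hα0 : ∀ n, 0 ≤ α n)
    (hαt : Tendsto α atTop atTop) {δ : ℝ} (hδ : 0 < δ) {N : ℕ} (hN : 1 ≤ N)
    (hlog : ∀ m : ℕ, N ≤ m → Real.log m ≤ δ * α m) (s : ℝ) :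
    (nu α s : ℝ) ≤ N + Real.exp (δ * s) := by
  rcases Nat.eq_zero_or_pos (nu α s) with h0 | h1
  · rw [h0]
    push_cast
    positivity
  have hαs : α (nu α s - 1) ≤ s := alpha_at_nu hm hαt s h1
  set m := nu α s - 1 with hm'
  have hnum : nu α s = m + 1 := by omega
  rcases lt_or_ge m N with hc | hc
  · rw [hnum]
    have : (m : ℝ) + 1 ≤ N := by exact_mod_cast hc
    push_cast
    nlinarith [Real.exp_pos (δ * s)]
  · have hlogm : Real.log m ≤ δ * s := le_trans (hlog m hc) (by nlinarith)
    have hm1 : (1 : ℝ) ≤ m := by exact_mod_cast le_trans hN hc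
    have : (m : ℝ) ≤ Real.exp (δ * s) := by
      calc (m : ℝ) = Real.exp (Real.log m) := (Real.exp_log (by linarith)).symm
        _ ≤ Real.exp (δ * s) := Real.exp_le_exp.2 hlogm
    rw [hnum]
    push_cast
    have : (1:ℝ) ≤ N := by exact_mod_cast hN
    linarith

/-- if log n = o(α_n) and log n = o(β_n), then log n = o((α♯β)_n). -/
theorem stmt6 (α β γ : ℕ → ℝ) (hα : ExpSeq α) (hβ : ExpSeq β)
    (hγ : IsSharp α β γ)
    (h1 : (fun n : ℕ => Real.log n) =o[atTop] α)
    (h2 : (fun n : ℕ => Real.log n) =o[atTop] β) :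
    (fun n : ℕ => Real.log n) =o[atTop] γ := by
  obtain ⟨hγm, hγn⟩ := hγ
  obtain ⟨hαm, hα0, hαt⟩ := hα
  obtain ⟨hβm, hβ0, hβt⟩ := hβ
  -- γ tends to infinity
  have hγt : Tendsto γ atTop atTop := by
    apply tendsto_atTop_atTop_of_monotone hγm
    intro b
    by_contra hb
    push_neg at hb
    set s := max b (α 0 + β 0) with hs
    have hzero : nu γ s = 0 := by
      have huniv : {n : ℕ | γ n ≤ s} = Set.univ := by
        ext n; simp only [Set.mem_setOf_eq, Set.mem_univ, iff_true]
        exact le_trans (hb n).le (le_max_left _ _)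
      rw [nu, huniv, Nat.card_coe_set_eq, Set.ncard_univ]
      exact Nat.card_eq_zero_of_infinite
    have hpos : 0 < nu2 α β s := by
      have hfin := fin2_count hα0 hβ0 hαt hβt s
      have hmem : ((0, 0) : ℕ × ℕ) ∈ {p : ℕ × ℕ | α p.1 + β p.2 ≤ s} :=
        show α 0 + β 0 ≤ s from le_max_right _ _
      haveI := hfin.to_subtype
      haveI : Nonempty {p : ℕ × ℕ | α p.1 + β p.2 ≤ s} := ⟨⟨_, hmem⟩⟩
      exact Nat.card_pos
    rw [← hγn s, hzero] at hpos
    exact lt_irrefl 0 hpos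
  -- lower bound on nu γ
  have hlow : ∀ n : ℕ, n + 1 ≤ nu γ (γ n) := by
    intro n
    have hsub : (Set.Iic n : Set ℕ) ⊆ {m : ℕ | γ m ≤ γ n} := fun k hk => hγm hk
    have : (Set.Iic n).ncard ≤ nu γ (γ n) := by
      rw [nu, Nat.card_coe_set_eq]
      exact Set.ncard_le_ncard hsub (fin_count hγt (γ n))
    rwa [← Finset.coe_Iic, Set.ncard_coe_finset, Nat.card_Iic] at this
  -- the little-o estimate
  rw [isLittleO_iff] at h1 h2 ⊢
  intro ε hε
  set δ := ε / 3 with hδdef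
  have hδ : 0 < δ := by positivity
  obtain ⟨N₀, hN₀⟩ := (((h1 hδ).and (h2 hδ)).and (eventually_ge_atTop 1)).exists_forall_of_atTop
  have hN1 : 1 ≤ N₀ := (hN₀ N₀ le_rfl).2
  have hlogα : ∀ m : ℕ, N₀ ≤ m → Real.log m ≤ δ * α m := by
    intro m hm
    calc Real.log m ≤ |Real.log m| := le_abs_self _
      _ = ‖Real.log m‖ := (Real.norm_eq_abs _).symm
      _ ≤ δ * ‖α m‖ := (hN₀ m hm).1.1
      _ = δ * α m := by rw [Real.norm_eq_abs, abs_of_nonneg (hα0 m)]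
  have hlogβ : ∀ m : ℕ, N₀ ≤ m → Real.log m ≤ δ * β m := by
    intro m hm
    calc Real.log m ≤ |Real.log m| := le_abs_self _
      _ = ‖Real.log m‖ := (Real.norm_eq_abs _).symm
      _ ≤ δ * ‖β m‖ := (hN₀ m hm).1.2
      _ = δ * β m := by rw [Real.norm_eq_abs, abs_of_nonneg (hβ0 m)]
  have Cα := nu_upper hαm hα0 hαt hδ hN1 hlogα
  have Cβ := nu_upper hβm hβ0 hβt hδ hN1 hlogβ
  have hNr : (1 : ℝ) ≤ N₀ := by exact_mod_cast hN1
  filter_upwards [eventually_ge_atTop 1, hγt.eventually_ge_atTop 0,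
    hγt.eventually_ge_atTop ((2 * Real.log (2 * N₀)) / δ)] with n hn1 hγ0 hγbig
  set x := δ * γ n with hx
  have hx0 : 0 ≤ x := mul_nonneg hδ.le hγ0
  have hcb : 2 * Real.log (2 * N₀) ≤ x := by
    rw [div_le_iff₀ hδ] at hγbig
    rw [hx]; linarith
  set A : ℝ := N₀ + Real.exp x with hA
  set B : ℝ := 2 * N₀ * Real.exp x with hB
  have hAB : A ≤ B := by
    have h1e : (1 : ℝ) ≤ Real.exp x := Real.one_le_exp hx0
    rw [hA, hB]
    nlinarith [Real.exp_pos x]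
  have hA0 : 0 ≤ A := by positivity
  have hprod : ((n : ℝ) + 1) ≤ A ^ 2 := by
    have hstep : (n + 1 : ℕ) ≤ nu α (γ n) * nu β (γ n) := by
      have h' := hlow n
      rw [hγn] at h'
      exact le_trans h' (nu2_le hα0 hβ0 hαt hβt (γ n))
    calc ((n : ℝ) + 1) ≤ (nu α (γ n) : ℝ) * (nu β (γ n) : ℝ) := by exact_mod_cast hstep
      _ ≤ A * A := mul_le_mul (Cα _) (Cβ _) (Nat.cast_nonneg _) hA0
      _ = A ^ 2 := (sq A).symm
  have hBn : (n : ℝ) ≤ B ^ 2 := by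
    have : A ^ 2 ≤ B ^ 2 := pow_le_pow_left₀ hA0 hAB 2
    linarith
  have hlogn : Real.log n ≤ Real.log (B ^ 2) := by
    apply Real.log_le_log _ hBn
    exact_mod_cast Nat.lt_of_lt_of_le Nat.zero_lt_one hn1
  have hlogB : Real.log (B ^ 2) = 2 * (Real.log (2 * N₀) + x) := by
    rw [Real.log_pow, hB, Real.log_mul (by positivity) (Real.exp_ne_zero x), Real.log_exp]
    push_cast
    ring
  have hfinal : Real.log n ≤ ε * γ n := by
    have h3 : ε * γ n = 3 * x := by rw [hx, hδdef]; ring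
    rw [h3]
    rw [hlogB] at hlogn
    linarith
  rw [Real.norm_eq_abs, Real.norm_eq_abs,
    abs_of_nonneg (Real.log_nonneg (by exact_mod_cast hn1)), abs_of_nonneg hγ0]
  exact hfinal
end

section
/- Let α and β be exponent sequences. If α is stable (α_{2n} = O(α_n)), then α♯β is stable, i.e., (α♯β)_{2n} = O((α♯β)_n). -/
open Filter Asymptotics

lemma finite_le_of_tendsto (α : ℕ → ℝ) (h : Tendsto α atTop atTop) (s : ℝ) :
    {n : ℕ | α n ≤ s}.Finite := by
  obtain ⟨N, hN⟩ := eventually_atTop.mp (h.eventually_gt_atTop s)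
  apply Set.Finite.subset (Set.finite_Iio N)
  intro n hn
  simp only [Set.mem_setOf_eq] at hn
  by_contra hc
  exact absurd (hN n (le_of_not_gt hc)) (not_lt.mpr hn)

lemma finite_pairs (α β : ℕ → ℝ) (hα : ExpSeq α) (hβ : ExpSeq β) (s : ℝ) :
    {p : ℕ × ℕ | α p.1 + β p.2 ≤ s}.Finite := by
  apply Set.Finite.subset
    ((finite_le_of_tendsto α hα.2.2 s).prod (finite_le_of_tendsto β hβ.2.2 s))
  rintro ⟨k, n⟩ h
  simp only [Set.mem_setOf_eq] at h
  constructor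
  · simp only [Set.mem_setOf_eq]; linarith [hβ.2.1 n]
  · simp only [Set.mem_setOf_eq]; linarith [hα.2.1 k]

lemma keyA (α : ℕ → ℝ) (hα : ExpSeq α)
    (hstab : (fun n : ℕ => α (2 * n)) =O[atTop] (fun n : ℕ => α n)) :
    ∃ K B : ℝ, 1 ≤ K ∧ 0 ≤ B ∧ ∀ k : ℕ, ∀ u : ℝ, α k ≤ u → α (2 * k + 1) ≤ K * u + B := by
  obtain ⟨C, hC⟩ := hstab.isBigOWith
  obtain ⟨N, hN⟩ := eventually_atTop.mp hC.bound
  set C' : ℝ := max C 1 with hC'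
  have hC'1 : (1:ℝ) ≤ C' := le_max_right _ _
  have hstab' : ∀ n : ℕ, N ≤ n → α (2 * n) ≤ C' * α n := by
    intro n hn
    have := hN n hn
    simp only [Real.norm_eq_abs, abs_of_nonneg (hα.2.1 _)] at this
    calc α (2 * n) ≤ C * α n := this
      _ ≤ C' * α n := mul_le_mul_of_nonneg_right (le_max_left _ _) (hα.2.1 n)
  refine ⟨C' * C', α (2 * N + 2), by nlinarith, hα.2.1 _, ?_⟩
  intro k u hku
  have hu0 : 0 ≤ u := le_trans (hα.2.1 k) hku
  rcases le_or_gt k N with hk | hk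
  · have h1 : α (2 * k + 1) ≤ α (2 * N + 2) := hα.1 (by omega)
    nlinarith
  · have hkN : N ≤ k := le_of_lt hk
    have hk1 : 1 ≤ k := by omega
    have h1 : α (2 * k + 1) ≤ α (2 * (2 * k)) := hα.1 (by omega)
    have h2 : α (2 * (2 * k)) ≤ C' * α (2 * k) := hstab' (2 * k) (by omega)
    have h3 : α (2 * k) ≤ C' * α k := hstab' k hkN
    have h4 : C' * α (2 * k) ≤ C' * (C' * α k) :=
      mul_le_mul_of_nonneg_left h3 (by linarith)
    have h5 : C' * (C' * α k) ≤ C' * C' * u := by nlinarith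
    nlinarith [hα.2.1 (2 * N + 2)]

lemma nu2_double (α β : ℕ → ℝ) (hα : ExpSeq α) (hβ : ExpSeq β)
    (K B : ℝ) (hK : 1 ≤ K) (hB : 0 ≤ B)
    (hkey : ∀ k : ℕ, ∀ u : ℝ, α k ≤ u → α (2 * k + 1) ≤ K * u + B) :
    ∀ t : ℝ, 2 * nu2 α β t ≤ nu2 α β (K * t + B) := by
  intro t
  set S := {p : ℕ × ℕ | α p.1 + β p.2 ≤ t} with hS
  set T := {p : ℕ × ℕ | α p.1 + β p.2 ≤ K * t + B} with hT
  have hTfin : T.Finite := finite_pairs α β hα hβ _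
  have hmem : ∀ (p : ℕ × ℕ), p ∈ S → ∀ i : ℕ, i ≤ 1 → (2 * p.1 + i, p.2) ∈ T := by
    rintro ⟨k, n⟩ hp i hi
    simp only [hS, Set.mem_setOf_eq] at hp
    have hβn : 0 ≤ β n := hβ.2.1 n
    have hαk : α k ≤ t - β n := by linarith
    have h1 : α (2 * k + i) ≤ α (2 * k + 1) := hα.1 (by omega)
    have h2 : α (2 * k + 1) ≤ K * (t - β n) + B := hkey k _ hαk
    have h3 : β n ≤ K * β n := le_mul_of_one_le_left hβn hK
    show α (2 * k + i) + β n ≤ K * t + B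
    nlinarith
  haveI : Finite ↥T := hTfin.to_subtype
  have hinj : Function.Injective (fun x : ↥S × Bool =>
      (⟨(2 * x.1.val.1 + (if x.2 then 1 else 0), x.1.val.2),
        hmem x.1.val x.1.property _ (by split <;> omega)⟩ : ↥T)) := by
    rintro ⟨⟨⟨k1, n1⟩, h1⟩, i1⟩ ⟨⟨⟨k2, n2⟩, h2⟩, i2⟩ heq
    simp only [Subtype.mk.injEq, Prod.mk.injEq] at heq
    obtain ⟨ha, hb⟩ := heq
    have hki : k1 = k2 ∧ i1 = i2 := by
      cases i1 <;> cases i2 <;> simp only [if_true, if_false, Bool.false_eq_true,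
        Bool.true_eq_false, and_true, and_false, true_and, false_and] at ha ⊢ <;> omega
    simp only [Prod.mk.injEq, Subtype.mk.injEq, Prod.mk.injEq]
    exact ⟨⟨hki.1, hb⟩, hki.2⟩
  have hle := Nat.card_le_card_of_injective _ hinj
  have hcard : Nat.card (↥S × Bool) = Nat.card ↥S * 2 := by
    rw [Nat.card_prod]
    congr 1
    simp [Nat.card_eq_fintype_card]
  rw [hcard] at hle
  show 2 * Nat.card ↥S ≤ Nat.card ↥T
  exact le_trans (le_of_eq (by ring)) hle

/-- if α is stable (α_{2n} = O(α_n)), then α♯β is stable. -/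
theorem stmt7 (α β γ : ℕ → ℝ) (hα : ExpSeq α) (hβ : ExpSeq β)
    (hγ : IsSharp α β γ)
    (hstab : (fun n : ℕ => α (2 * n)) =O[atTop] (fun n : ℕ => α n)) :
    (fun n : ℕ => γ (2 * n)) =O[atTop] (fun n : ℕ => γ n) := by
  obtain ⟨hmono, hcount⟩ := hγ
  obtain ⟨K, B, hK, hB, hkey⟩ := keyA α hα hstab
  have hdouble := nu2_double α β hα hβ K B hK hB hkey
  -- finiteness of level sets of γ
  have hγfin : ∀ s : ℝ, {n : ℕ | γ n ≤ s}.Finite := by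
    intro s
    by_contra hinf
    have hinf' : {n : ℕ | γ n ≤ s}.Infinite := hinf
    have hbdd : ∀ n, γ n ≤ s := by
      intro n
      obtain ⟨m, hm, hnm⟩ := hinf'.exists_gt n
      exact le_trans (hmono (le_of_lt hnm)) hm
    set M : ℝ := max s (α 0 + β 0) with hM
    have huniv : {n : ℕ | γ n ≤ M} = Set.univ := by
      ext n; simp only [Set.mem_setOf_eq, Set.mem_univ, iff_true]
      exact le_trans (hbdd n) (le_max_left _ _)
    have h0 : nu γ M = 0 := by
      rw [nu, huniv, Nat.card_coe_set_eq, Set.ncard_univ]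
      exact Nat.card_eq_zero_of_infinite
    have h1 : 0 < nu2 α β M := by
      have hfin := finite_pairs α β hα hβ M
      have hne : ((0, 0) : ℕ × ℕ) ∈ {p : ℕ × ℕ | α p.1 + β p.2 ≤ M} := by
        simp only [Set.mem_setOf_eq]
        exact le_max_right _ _
      haveI := hfin.to_subtype
      haveI : Nonempty ↥{p : ℕ × ℕ | α p.1 + β p.2 ≤ M} := ⟨⟨_, hne⟩⟩
      exact Nat.card_pos
    rw [hcount M] at h0
    omega
  -- count lower bound: m + 1 ≤ nu γ (γ m)
  have hlow : ∀ m : ℕ, m + 1 ≤ nu γ (γ m) := by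
    intro m
    have hsub : Set.Iic m ⊆ {n : ℕ | γ n ≤ γ m} := fun n hn => hmono hn
    have h2 := Set.ncard_le_ncard hsub (hγfin (γ m))
    have h3 : (Set.Iic m).ncard = m + 1 := by
      rw [← Finset.coe_Iic, Set.ncard_coe_finset, Nat.card_Iic]
    rw [nu, Nat.card_coe_set_eq]
    omega
  -- index bound: j < nu γ s → γ j ≤ s
  have hidx : ∀ (j : ℕ) (s : ℝ), j < nu γ s → γ j ≤ s := by
    intro j s hj
    by_contra hc
    push_neg at hc
    have hsub : {n : ℕ | γ n ≤ s} ⊆ Set.Iio j := by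
      intro n hn
      simp only [Set.mem_setOf_eq] at hn
      simp only [Set.mem_Iio]
      by_contra hnj
      exact absurd (le_trans (hmono (le_of_not_gt hnj)) hn) (not_le.mpr hc)
    have h2 := Set.ncard_le_ncard hsub (Set.finite_Iio j)
    have h3 : (Set.Iio j).ncard = j := by
      rw [← Finset.coe_Iio, Set.ncard_coe_finset, Nat.card_Iio]
    rw [nu, Nat.card_coe_set_eq] at hj
    omega
  -- γ (2m) ≤ K * γ m + B
  have hmain : ∀ m : ℕ, γ (2 * m) ≤ K * γ m + B := by
    intro m
    apply hidx
    rw [hcount]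
    have h1 := hdouble (γ m)
    have h2 := hlow m
    rw [hcount] at h2
    omega
  -- γ tends to infinity
  have htend : Tendsto γ atTop atTop := by
    apply tendsto_atTop_atTop_of_monotone hmono
    intro b
    obtain ⟨n, hn⟩ := ((hγfin b).infinite_compl).nonempty
    exact ⟨n, le_of_not_ge hn⟩
  rw [isBigO_iff]
  refine ⟨K + B, ?_⟩
  filter_upwards [htend.eventually_ge_atTop (max B 1)] with m hm
  have hm1 : (1:ℝ) ≤ γ m := le_trans (le_max_right _ _) hm
  have hmB : B ≤ γ m := le_trans (le_max_left _ _) hm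
  have h2m : γ m ≤ γ (2 * m) := hmono (by omega)
  rw [Real.norm_eq_abs, Real.norm_eq_abs, abs_of_nonneg (by linarith),
    abs_of_nonneg (by linarith)]
  have := hmain m
  nlinarith
end

section
/- Let ω and η be weight functions (continuous, increasing, satisfying ω(2t) = O(ω(t)), η(2t) = O(η(t)), and log t = O(ω(t)), log t = O(η(t))). Define α(ω) = (ω(n))_{n ∈ ℕ}, α(η) = (η(n))_{n ∈ ℕ}, and α(ω,η) = (((ω⁻¹·η⁻¹)⁻¹)(n))_{n ∈ ℕ}, where ω⁻¹, η⁻¹ denote generalized inverses. Then α(ω)♯α(η) ≍ α(ω,η), i.e., each is O of the other. -/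
open Filter Asymptotics

/-- Generalized inverse of an increasing function `f : [0,∞) → [0,∞)`. -/
noncomputable def ginv (f : ℝ → ℝ) (s : ℝ) : ℝ := sInf {t : ℝ | 0 ≤ t ∧ s ≤ f t}


lemma ginv_bdd (f : ℝ → ℝ) (s : ℝ) : BddBelow {t : ℝ | 0 ≤ t ∧ s ≤ f t} :=
  ⟨0, fun _ hx => hx.1⟩

lemma ginv_nonneg (f : ℝ → ℝ) (s : ℝ) : 0 ≤ ginv f s :=
  Real.sInf_nonneg (fun _ hx => hx.1)

lemma lt_ginv_imp (f : ℝ → ℝ) {s t : ℝ} (ht : 0 ≤ t) (h : t < ginv f s) : f t < s := by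
  by_contra hc
  push_neg at hc
  exact absurd (csInf_le (ginv_bdd f s) ⟨ht, hc⟩) (not_le.2 h)

lemma ginv_le (f : ℝ → ℝ) {s t : ℝ} (ht : 0 ≤ t) (hs : s ≤ f t) : ginv f s ≤ t :=
  csInf_le (ginv_bdd f s) ⟨ht, hs⟩

lemma le_ginv (f : ℝ → ℝ) (hm : MonotoneOn f (Set.Ici 0)) {s t : ℝ}
    (hne : {u : ℝ | 0 ≤ u ∧ s ≤ f u}.Nonempty) (ht : 0 ≤ t) (h : f t < s) :
    t ≤ ginv f s := by
  refine le_csInf hne fun u hu => ?_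
  by_contra hc
  push_neg at hc
  exact absurd (lt_of_le_of_lt (hm hu.1 ht hc.le) h) (not_lt.2 hu.2)

lemma ginv_mono (f : ℝ → ℝ) (hne : ∀ s : ℝ, {u : ℝ | 0 ≤ u ∧ s ≤ f u}.Nonempty) :
    Monotone (ginv f) := fun s s' hss =>
  csInf_le_csInf (ginv_bdd f s) (hne s') (fun u hu => ⟨hu.1, hss.trans hu.2⟩)

lemma ginv_lt_imp (f : ℝ → ℝ) (hm : MonotoneOn f (Set.Ici 0)) {s t : ℝ}
    (hne : {u : ℝ | 0 ≤ u ∧ s ≤ f u}.Nonempty) (ht : 0 ≤ t) (h : ginv f s < t) :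
    s ≤ f t := by
  obtain ⟨u, hu, hut⟩ := exists_lt_of_csInf_lt hne h
  exact hu.2.trans (hm hu.1 ht hut.le)

/-- Nonemptiness of the ginv defining set, from the log lower bound. -/
lemma weight_ne (f : ℝ → ℝ) {A T : ℝ} (hA : 0 < A) (hT : 1 ≤ T)
    (h : ∀ t ≥ T, Real.log t ≤ A * f t) (s : ℝ) :
    {u : ℝ | 0 ≤ u ∧ s ≤ f u}.Nonempty := by
  set t := max T (Real.exp (A * max s 0)) with ht
  have htT : T ≤ t := le_max_left _ _
  have ht0 : (0:ℝ) ≤ t := le_trans (by linarith) htT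
  refine ⟨t, ht0, ?_⟩
  have hlog : A * max s 0 ≤ Real.log t := by
    calc A * max s 0 = Real.log (Real.exp (A * max s 0)) := (Real.log_exp _).symm
    _ ≤ Real.log t := Real.log_le_log (Real.exp_pos _) (le_max_right _ _)
  have := h t htT
  have : A * max s 0 ≤ A * f t := le_trans hlog this
  have hms : max s 0 ≤ f t := le_of_mul_le_mul_left this hA
  exact le_trans (le_max_left _ _) hms

lemma card_prod_set (A B : Set ℕ) : Nat.card ↑(A ×ˢ B) = Nat.card A * Nat.card B := by
  rw [Nat.card_congr (Equiv.Set.prod A B), Nat.card_prod]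

lemma card_Iio_nat (n : ℕ) : Nat.card (Set.Iio n) = n := by
  rw [Nat.card_coe_set_eq, Set.ncard_eq_toFinset_card', Set.toFinset_Iio, Nat.card_Iio]
lemma card_Iic_nat (n : ℕ) : Nat.card (Set.Iic n) = n + 1 := by
  rw [Nat.card_coe_set_eq, Set.ncard_eq_toFinset_card', Set.toFinset_Iic, Nat.card_Iic]

/-- Sublevel sets of a weight along ℕ are finite. -/
lemma weight_finite (f : ℝ → ℝ) (hm : MonotoneOn f (Set.Ici 0))
    (hne : ∀ s : ℝ, {u : ℝ | 0 ≤ u ∧ s ≤ f u}.Nonempty) (s : ℝ) :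
    {k : ℕ | f k ≤ s}.Finite := by
  apply Set.Finite.subset (Set.finite_Iic ⌊ginv f (s+1)⌋₊)
  intro k hk
  have h1 : (k:ℝ) ≤ ginv f (s+1) :=
    le_ginv f hm (hne _) (Nat.cast_nonneg k) (lt_of_le_of_lt hk (by linarith))
  exact Nat.le_floor h1

/-- Upper counting bound: #{k : f k ≤ s} ≤ ginv f (2s) + 1 for s > 0. -/
lemma weight_count_upper (f : ℝ → ℝ) (hm : MonotoneOn f (Set.Ici 0))
    (hne : ∀ s : ℝ, {u : ℝ | 0 ≤ u ∧ s ≤ f u}.Nonempty) {s : ℝ} (hs : 0 < s) :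
    (Nat.card {k : ℕ | f k ≤ s} : ℝ) ≤ ginv f (2*s) + 1 := by
  have hsub : {k : ℕ | f k ≤ s} ⊆ Set.Iic ⌊ginv f (2*s)⌋₊ := by
    intro k hk
    have h1 : (k:ℝ) ≤ ginv f (2*s) :=
      le_ginv f hm (hne _) (Nat.cast_nonneg k) (lt_of_le_of_lt hk (by linarith))
    exact Nat.le_floor h1
  have h2 : Nat.card {k : ℕ | f k ≤ s} ≤ Nat.card (Set.Iic ⌊ginv f (2*s)⌋₊) := by
    rw [Nat.card_coe_set_eq, Nat.card_coe_set_eq]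
    exact Set.ncard_le_ncard hsub (Set.finite_Iic _)
  rw [card_Iic_nat] at h2
  calc (Nat.card {k : ℕ | f k ≤ s} : ℝ) ≤ (⌊ginv f (2*s)⌋₊ : ℝ) + 1 := by
        exact_mod_cast h2
  _ ≤ ginv f (2*s) + 1 := by
        have := Nat.floor_le (ginv_nonneg f (2*s)); linarith [this]

/-- Doubling for the generalized inverse. -/
lemma ginv_double (f : ℝ → ℝ) (hm : MonotoneOn f (Set.Ici 0))
    (hne : ∀ s : ℝ, {u : ℝ | 0 ≤ u ∧ s ≤ f u}.Nonempty)
    (h0 : ∀ t ≥ (0:ℝ), 0 ≤ f t)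
    {A T : ℝ} (hA : 1 ≤ A) (hT : 0 ≤ T) (hd : ∀ t ≥ T, f (2*t) ≤ A * f t)
    {s : ℝ} (hs : f (2*T) < s) :
    2 * ginv f s ≤ ginv f (A * s) := by
  refine le_csInf (hne _) fun u hu => ?_
  by_contra hc
  push_neg at hc
  have hu0 : 0 ≤ u := hu.1
  have hs0 : 0 < s := lt_of_le_of_lt (h0 (2*T) (by linarith)) hs
  have huT : 2*T < u := by
    by_contra h2
    push_neg at h2
    have h7 : f u ≤ f (2*T) := hm hu.1 (Set.mem_Ici.2 (by linarith)) h2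
    have h8 : f u < s := lt_of_le_of_lt h7 hs
    have hss : s ≤ A * s := le_mul_of_one_le_left hs0.le hA
    nlinarith [hu.2]
  have h3 : u/2 < ginv f s := by linarith
  have h4 : f (u/2) < s := lt_ginv_imp f (by linarith) h3
  have h5 : f u ≤ A * f (u/2) := by
    have := hd (u/2) (by linarith)
    simpa [mul_div_cancel₀] using this
  have h6 : A * f (u/2) < A * s := by
    exact mul_lt_mul_of_pos_left h4 (by linarith)
  nlinarith [hu.2]

/-- for weight functions ω, η, the sequence α(ω)♯α(η) is equivalent
(each is O of the other) to α(ω,η) = (((ω⁻¹·η⁻¹)⁻¹)(n))ₙ. -/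
theorem stmt8 (ω η : ℝ → ℝ)
    (hωc : ContinuousOn ω (Set.Ici 0)) (hωm : MonotoneOn ω (Set.Ici 0))
    (hω0 : ∀ t ≥ (0:ℝ), 0 ≤ ω t)
    (hηc : ContinuousOn η (Set.Ici 0)) (hηm : MonotoneOn η (Set.Ici 0))
    (hη0 : ∀ t ≥ (0:ℝ), 0 ≤ η t)
    (hωα : ∃ A > (0:ℝ), ∃ T ≥ (0:ℝ), ∀ t ≥ T, ω (2 * t) ≤ A * ω t)
    (hηα : ∃ A > (0:ℝ), ∃ T ≥ (0:ℝ), ∀ t ≥ T, η (2 * t) ≤ A * η t)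
    (hωγ : ∃ A > (0:ℝ), ∃ T ≥ (1:ℝ), ∀ t ≥ T, Real.log t ≤ A * ω t)
    (hηγ : ∃ A > (0:ℝ), ∃ T ≥ (1:ℝ), ∀ t ≥ T, Real.log t ≤ A * η t)
    (γ : ℕ → ℝ) (hγ : IsSharp (fun n : ℕ => ω n) (fun n : ℕ => η n) γ) :
    ((fun n : ℕ => γ n) =O[atTop]
      (fun n : ℕ => ginv (fun s => ginv ω s * ginv η s) n)) ∧
    ((fun n : ℕ => ginv (fun s => ginv ω s * ginv η s) n) =O[atTop]
      (fun n : ℕ => γ n)) := by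
  
  obtain ⟨hγm, hγν⟩ := hγ
  obtain ⟨Aω, hAω, Tω, hTω, hdω⟩ := hωα
  obtain ⟨Aη, hAη, Tη, hTη, hdη⟩ := hηα
  obtain ⟨Bω, hBω, Sω, hSω, hlω⟩ := hωγ
  obtain ⟨Bη, hBη, Sη, hSη, hlη⟩ := hηγ
  have hneω : ∀ s : ℝ, {u : ℝ | 0 ≤ u ∧ s ≤ ω u}.Nonempty :=
    weight_ne ω hBω hSω hlω
  have hneη : ∀ s : ℝ, {u : ℝ | 0 ≤ u ∧ s ≤ η u}.Nonempty :=
    weight_ne η hBη hSη hlη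
  set ψ : ℝ → ℝ := fun s => ginv ω s * ginv η s with hψdef
  set φ : ℝ → ℝ := ginv ψ with hφdef
  have hωimono : Monotone (ginv ω) := ginv_mono ω hneω
  have hηimono : Monotone (ginv η) := ginv_mono η hneη
  have hψm : Monotone ψ := fun a b hab =>
    mul_le_mul (hωimono hab) (hηimono hab) (ginv_nonneg η a)
      (le_trans (ginv_nonneg ω a) (hωimono hab))
  have hψ0 : ∀ s, 0 ≤ ψ s := fun s => mul_nonneg (ginv_nonneg ω s) (ginv_nonneg η s)
  -- nonemptiness for ψ
  have hneψ : ∀ s : ℝ, {u : ℝ | 0 ≤ u ∧ s ≤ ψ u}.Nonempty := by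
    intro s
    set s' := max s 1 with hs'
    set u := max (ω s') (η 1) + 1 with hu
    have hs'0 : (0:ℝ) ≤ s' := le_trans zero_le_one (le_max_right _ _)
    have hωs' : 0 ≤ ω s' := hω0 s' hs'0
    have hu0 : 0 ≤ u := by
      have : ω s' ≤ max (ω s') (η 1) := le_max_left _ _
      linarith
    have h1 : s' ≤ ginv ω u := le_ginv ω hωm (hneω u) hs'0 (by
      have : ω s' ≤ max (ω s') (η 1) := le_max_left _ _
      linarith)
    have h2 : (1:ℝ) ≤ ginv η u := le_ginv η hηm (hneη u) zero_le_one (by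
      have : η 1 ≤ max (ω s') (η 1) := le_max_right _ _
      linarith)
    refine ⟨u, hu0, ?_⟩
    calc s ≤ s' := le_max_left _ _
    _ = s' * 1 := (mul_one _).symm
    _ ≤ ginv ω u * ginv η u :=
        mul_le_mul h1 h2 zero_le_one (ginv_nonneg ω u)
  have hφmono : Monotone φ := ginv_mono ψ hneψ
  -- the doubling constant
  set A₀ : ℝ := max (max Aω 1) (max Aη 1) with hA₀
  have hA₀1 : (1:ℝ) ≤ A₀ := le_trans (le_max_right Aω 1) (le_max_left _ _)
  have hA₀0 : (0:ℝ) < A₀ := lt_of_lt_of_le one_pos hA₀1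
  have hdω' : ∀ t ≥ Tω, ω (2*t) ≤ A₀ * ω t := fun t ht =>
    le_trans (hdω t ht) (mul_le_mul_of_nonneg_right
      (le_trans (le_max_left Aω 1) (le_max_left _ _)) (hω0 t (le_trans hTω ht)))
  have hdη' : ∀ t ≥ Tη, η (2*t) ≤ A₀ * η t := fun t ht =>
    le_trans (hdη t ht) (mul_le_mul_of_nonneg_right
      (le_trans (le_max_left Aη 1) (le_max_right _ _)) (hη0 t (le_trans hTη ht)))
  set s₀ : ℝ := max (ω (2*Tω)) (η (2*Tη)) with hs₀
  have hs₀0 : 0 ≤ s₀ := le_trans (hω0 _ (by linarith)) (le_max_left _ _)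
  -- doubling for ψ
  have hψdouble : ∀ s : ℝ, s₀ < s → 4 * ψ s ≤ ψ (A₀ * s) := by
    intro s hs
    have h1 : 2 * ginv ω s ≤ ginv ω (A₀ * s) :=
      ginv_double ω hωm hneω hω0 hA₀1 hTω hdω' (lt_of_le_of_lt (le_max_left _ _) hs)
    have h2 : 2 * ginv η s ≤ ginv η (A₀ * s) :=
      ginv_double η hηm hneη hη0 hA₀1 hTη hdη' (lt_of_le_of_lt (le_max_right _ _) hs)
    have := mul_le_mul h1 h2 (by linarith [ginv_nonneg η s])
      (le_trans (by linarith [ginv_nonneg ω s]) h1)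
    calc 4 * ψ s = (2 * ginv ω s) * (2 * ginv η s) := by simp only [hψdef]; ring
    _ ≤ ginv ω (A₀ * s) * ginv η (A₀ * s) := this
    _ = ψ (A₀ * s) := rfl
  -- counting function of pairs
  set N : ℝ → ℕ := fun s => Nat.card {p : ℕ × ℕ | ω p.1 + η p.2 ≤ s} with hN
  have hNnu2 : ∀ s, nu2 (fun n : ℕ => ω n) (fun n : ℕ => η n) s = N s := fun s => rfl
  have hfinω : ∀ s : ℝ, {k : ℕ | ω k ≤ s}.Finite := weight_finite ω hωm hneω
  have hfinη : ∀ s : ℝ, {k : ℕ | η k ≤ s}.Finite := weight_finite η hηm hneη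
  have hPsub : ∀ s : ℝ, {p : ℕ × ℕ | ω p.1 + η p.2 ≤ s}
      ⊆ {k : ℕ | ω k ≤ s} ×ˢ {k : ℕ | η k ≤ s} := by
    intro s p hp
    have h1 : 0 ≤ ω p.1 := hω0 _ (Nat.cast_nonneg _)
    have h2 : 0 ≤ η p.2 := hη0 _ (Nat.cast_nonneg _)
    have hp' : ω p.1 + η p.2 ≤ s := hp
    exact ⟨by simp only [Set.mem_setOf_eq]; linarith, by
      simp only [Set.mem_setOf_eq]; linarith⟩
  have hPfin : ∀ s : ℝ, {p : ℕ × ℕ | ω p.1 + η p.2 ≤ s}.Finite := fun s =>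
    Set.Finite.subset ((hfinω s).prod (hfinη s)) (hPsub s)
  -- lower bound for N
  have hNlower : ∀ t : ℝ, ψ t ≤ (N (2*t) : ℝ) := by
    intro t
    have hsub : (Set.Iio ⌈ginv ω t⌉₊) ×ˢ (Set.Iio ⌈ginv η t⌉₊)
        ⊆ {p : ℕ × ℕ | ω p.1 + η p.2 ≤ 2*t} := by
      rintro ⟨k, m⟩ ⟨hk, hm⟩
      have hk' : (k:ℝ) < ginv ω t := Nat.lt_ceil.mp hk
      have hm' : (m:ℝ) < ginv η t := Nat.lt_ceil.mp hm
      have h1 : ω k < t := lt_ginv_imp ω (Nat.cast_nonneg _) hk'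
      have h2 : η m < t := lt_ginv_imp η (Nat.cast_nonneg _) hm'
      simp only [Set.mem_setOf_eq]
      linarith
    have hcard : ⌈ginv ω t⌉₊ * ⌈ginv η t⌉₊ ≤ N (2*t) := by
      have h := Set.ncard_le_ncard hsub (hPfin (2*t))
      simp only [hN, Nat.card_coe_set_eq]
      calc ⌈ginv ω t⌉₊ * ⌈ginv η t⌉₊
          = ((Set.Iio ⌈ginv ω t⌉₊) ×ˢ (Set.Iio ⌈ginv η t⌉₊)).ncard := by
            rw [← Nat.card_coe_set_eq, card_prod_set, card_Iio_nat, card_Iio_nat]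
      _ ≤ _ := h
    calc ψ t = ginv ω t * ginv η t := rfl
    _ ≤ (⌈ginv ω t⌉₊ : ℝ) * (⌈ginv η t⌉₊ : ℝ) :=
        mul_le_mul (Nat.le_ceil _) (Nat.le_ceil _) (ginv_nonneg η t) (Nat.cast_nonneg _)
    _ ≤ (N (2*t) : ℝ) := by exact_mod_cast hcard
  -- upper bound for N
  have hNupper : ∀ s : ℝ, 0 < s →
      (N s : ℝ) ≤ (ginv ω (2*s) + 1) * (ginv η (2*s) + 1) := by
    intro s hs
    have h1 := weight_count_upper ω hωm hneω hs
    have h2 := weight_count_upper η hηm hneη hs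
    have hsub := hPsub s
    have hcard : N s ≤ Nat.card {k : ℕ | ω k ≤ s} * Nat.card {k : ℕ | η k ≤ s} := by
      have h := Set.ncard_le_ncard hsub ((hfinω s).prod (hfinη s))
      rw [← Nat.card_coe_set_eq, ← Nat.card_coe_set_eq, card_prod_set,
        Nat.card_coe_set_eq, Nat.card_coe_set_eq] at h
      simpa only [hN, Nat.card_coe_set_eq] using h
    calc (N s : ℝ) ≤ (Nat.card {k : ℕ | ω k ≤ s} : ℝ) * (Nat.card {k : ℕ | η k ≤ s} : ℝ) := by
          exact_mod_cast hcard
    _ ≤ (ginv ω (2*s) + 1) * (ginv η (2*s) + 1) :=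
        mul_le_mul h1 h2 (Nat.cast_nonneg _) (by linarith [ginv_nonneg ω (2*s)])
  -- bridge: sublevel sets of γ are finite
  have hγfin : ∀ s : ℝ, {m : ℕ | γ m ≤ s}.Finite := by
    intro s
    set s' := max s (ω 0 + η 0) with hs'
    have hmem : ((0,0) : ℕ × ℕ) ∈ {p : ℕ × ℕ | ω p.1 + η p.2 ≤ s'} := by
      simp only [Set.mem_setOf_eq, Nat.cast_zero]
      exact le_max_right _ _
    have hpos : 0 < N s' := by
      simp only [hN, Nat.card_coe_set_eq]
      exact (Set.ncard_pos (hPfin s')).mpr ⟨_, hmem⟩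
    have hnuγ : nu γ s' = N s' := by rw [hγν s', hNnu2]
    have hfin' : {m : ℕ | γ m ≤ s'}.Finite := by
      by_contra hinf
      have : nu γ s' = 0 := by
        rw [nu, Nat.card_coe_set_eq, Set.Infinite.ncard hinf]
      omega
    exact hfin'.subset fun m (hm : γ m ≤ s) =>
      show γ m ≤ s' from le_trans hm (le_max_left _ _)
  -- bridge lemma B1
  have hB1 : ∀ (n : ℕ) (s : ℝ), γ n ≤ s → n < N s := by
    intro n s hns
    have hsub : Set.Iic n ⊆ {m : ℕ | γ m ≤ s} := fun m hm =>
      le_trans (hγm (Set.mem_Iic.mp hm)) hns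
    have : n + 1 ≤ N s := by
      rw [← hNnu2, ← hγν, nu, Nat.card_coe_set_eq, ← card_Iic_nat n,
        Nat.card_coe_set_eq]
      exact Set.ncard_le_ncard hsub (hγfin s)
    omega
  -- bridge lemma B2
  have hB2 : ∀ (n : ℕ) (s : ℝ), n < N s → γ n ≤ s := by
    intro n s hns
    by_contra hc
    push_neg at hc
    have hsub : {m : ℕ | γ m ≤ s} ⊆ Set.Iio n := by
      intro m hm
      simp only [Set.mem_Iio]
      by_contra h2
      push_neg at h2
      exact absurd (lt_of_le_of_lt hm hc) (not_lt.2 (hγm h2))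
    have : N s ≤ n := by
      rw [← hNnu2, ← hγν, nu, Nat.card_coe_set_eq, ← card_Iio_nat n,
        Nat.card_coe_set_eq]
      exact Set.ncard_le_ncard hsub (Set.finite_Iio n)
    omega
  -- γ is eventually large
  have hγbig : ∀ s : ℝ, ∀ᶠ n : ℕ in atTop, s < γ n := by
    intro s
    rw [eventually_atTop]
    exact ⟨N s, fun n hn => by
      by_contra hc
      push_neg at hc
      exact absurd (hB1 n s hc) (not_lt.2 hn)⟩
  -- φ is eventually large
  have hφbig : ∀ C : ℝ, 0 ≤ C → ∀ᶠ n : ℕ in atTop, C ≤ φ n := by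
    intro C hC
    rw [eventually_atTop]
    refine ⟨⌈ψ C⌉₊ + 1, fun n hn => ?_⟩
    have h1 : ψ C < n := by
      have := Nat.le_ceil (ψ C)
      have h2 : (⌈ψ C⌉₊ + 1 : ℝ) ≤ n := by exact_mod_cast hn
      push_cast at h2 ⊢
      linarith
    exact le_ginv ψ (hψm.monotoneOn _) (hneψ _) hC h1
  -- key upper estimate: γ n ≤ 2 φ (n+1)
  have hkey1 : ∀ n : ℕ, γ n ≤ 2 * φ ((n:ℝ) + 1) := by
    intro n
    have h : ∀ ε > (0:ℝ), γ n ≤ 2 * φ ((n:ℝ) + 1) + ε := by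
      intro ε hε
      set t := φ ((n:ℝ) + 1) + ε/2 with ht
      have ht0 : 0 ≤ t := by
        have := ginv_nonneg ψ ((n:ℝ)+1); rw [ht]; linarith
      have h1 : (n:ℝ) + 1 ≤ ψ t :=
        ginv_lt_imp ψ (hψm.monotoneOn _) (hneψ _) ht0 (by rw [ht]; linarith)
      have h2 : (n:ℝ) < (N (2*t) : ℝ) := lt_of_lt_of_le (by linarith [hNlower t]) le_rfl
      have h3 : n < N (2*t) := by exact_mod_cast h2
      have := hB2 n (2*t) h3
      rw [ht] at this; linarith
    exact le_of_forall_pos_le_add h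
  -- doubling estimate for φ
  have hkey2 : ∀ n : ℕ, s₀ ≤ φ n → φ (4*(n:ℝ)) ≤ A₀ * φ n := by
    intro n hn
    have h : ∀ ε > (0:ℝ), φ (4*(n:ℝ)) ≤ A₀ * φ n + ε := by
      intro ε hε
      set t := φ n + ε/A₀ with ht
      have hεA : 0 < ε/A₀ := div_pos hε hA₀0
      have ht0 : 0 ≤ t := by
        have := ginv_nonneg ψ (n:ℝ); rw [ht]; linarith
      have h1 : (n:ℝ) ≤ ψ t :=
        ginv_lt_imp ψ (hψm.monotoneOn _) (hneψ _) ht0 (by rw [ht]; linarith)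
      have h2 : s₀ < t := by rw [ht]; linarith
      have h3 : 4*(n:ℝ) ≤ ψ (A₀ * t) := le_trans (by linarith) (hψdouble t h2)
      have h4 : φ (4*(n:ℝ)) ≤ A₀ * t :=
        ginv_le ψ (mul_nonneg hA₀0.le ht0) h3
      rw [ht] at h4
      rw [mul_add] at h4
      rw [mul_div_cancel₀ ε (ne_of_gt hA₀0)] at h4
      exact h4
    exact le_of_forall_pos_le_add h
  constructor
  · -- γ = O(φ)
    rw [isBigO_iff]
    refine ⟨2 * A₀, ?_⟩
    have hev1 : ∀ᶠ n : ℕ in atTop, s₀ ≤ φ n := hφbig s₀ hs₀0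
    have hev2 : ∀ᶠ n : ℕ in atTop, 1 ≤ n := eventually_atTop.mpr ⟨1, fun n hn => hn⟩
    have hev3 : ∀ᶠ n : ℕ in atTop, (0:ℝ) < γ n := hγbig 0
    filter_upwards [hev1, hev2, hev3] with n h1 h2 h3
    have hstep1 : γ n ≤ 2 * φ ((n:ℝ) + 1) := hkey1 n
    have hstep2 : φ ((n:ℝ) + 1) ≤ φ (4*(n:ℝ)) := by
      apply hφmono
      have : (1:ℝ) ≤ (n:ℝ) := by exact_mod_cast h2
      linarith
    have hstep3 : φ (4*(n:ℝ)) ≤ A₀ * φ n := hkey2 n h1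
    have hφn0 : 0 ≤ φ (n:ℝ) := ginv_nonneg ψ _
    rw [Real.norm_eq_abs, Real.norm_eq_abs, abs_of_nonneg h3.le, abs_of_nonneg hφn0]
    calc γ n ≤ 2 * φ ((n:ℝ)+1) := hstep1
    _ ≤ 2 * (A₀ * φ n) := by linarith
    _ = 2 * A₀ * φ (n:ℝ) := by ring
  · -- φ = O(γ)
    rw [isBigO_iff]
    refine ⟨2 * A₀, ?_⟩
    set s₂ : ℝ := max (max (ω 1) (η 1)) s₀ with hs₂
    have hev : ∀ᶠ n : ℕ in atTop, s₂ < γ n := hγbig s₂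
    filter_upwards [hev] with n hn
    have hγn0 : 0 < γ n := lt_of_le_of_lt
      (le_trans hs₀0 (le_max_right _ _)) hn
    have h1 : n < N (γ n) := hB1 n (γ n) le_rfl
    have h2 : (N (γ n) : ℝ) ≤ (ginv ω (2*γ n) + 1) * (ginv η (2*γ n) + 1) :=
      hNupper (γ n) hγn0
    -- the inverses are at least 1
    have hω1 : (1:ℝ) ≤ ginv ω (2*γ n) := by
      apply le_ginv ω hωm (hneω _) zero_le_one
      have : ω 1 ≤ s₂ := le_trans (le_max_left _ _) (le_max_left _ _)
      linarith
    have hη1 : (1:ℝ) ≤ ginv η (2*γ n) := by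
      apply le_ginv η hηm (hneη _) zero_le_one
      have : η 1 ≤ s₂ := le_trans (le_max_right _ _) (le_max_left _ _)
      linarith
    have h3 : (ginv ω (2*γ n) + 1) * (ginv η (2*γ n) + 1) ≤ 4 * ψ (γ n * 2) := by
      have e1 : ginv ω (2*γ n) + 1 ≤ 2 * ginv ω (2*γ n) := by linarith
      have e2 : ginv η (2*γ n) + 1 ≤ 2 * ginv η (2*γ n) := by linarith
      have := mul_le_mul e1 e2 (by linarith) (by linarith)
      calc (ginv ω (2*γ n) + 1) * (ginv η (2*γ n) + 1)
          ≤ (2*ginv ω (2*γ n)) * (2*ginv η (2*γ n)) := this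
      _ = 4 * (ginv ω (2*γ n) * ginv η (2*γ n)) := by ring
      _ = 4 * ψ (γ n * 2) := by rw [hψdef]; ring_nf
    have h4 : 4 * ψ (γ n * 2) ≤ ψ (A₀ * (γ n * 2)) := by
      apply hψdouble
      have : s₀ ≤ s₂ := le_max_right _ _
      linarith
    have h5 : (n:ℝ) ≤ ψ (A₀ * (γ n * 2)) := by
      have hcast : (n:ℝ) < (N (γ n) : ℝ) := by exact_mod_cast h1
      linarith
    have h6 : φ n ≤ A₀ * (γ n * 2) :=
      ginv_le ψ (by positivity) h5
    have hφn0 : 0 ≤ φ (n:ℝ) := ginv_nonneg ψ _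
    rw [Real.norm_eq_abs, Real.norm_eq_abs, abs_of_nonneg hφn0, abs_of_nonneg hγn0.le]
    calc φ (n:ℝ) ≤ A₀ * (γ n * 2) := h6
    _ = 2 * A₀ * γ n := by ring
end
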